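/- Let Γ be a finite simple graph and Γ₁, Γ₂ induced subgraphs of Γ. Let w ∈ W_{Γ₁} and u, u' ∈ W_Γ be such that: (1) no reduced expression of u or u' begins with a letter from Γ₁ (i.e. |a·u| > |u| for all a ∈ Γ₁, and likewise for u'); (2) no reduced expression of u or u' ends with a letter from Γ₂ (i.e. |u·a| > |u| for all a ∈ Γ₂, likewise for u'); (3) u⁻¹ w u' ∈ W_{Γ₂}. Then w ∈ W_{Γ₁ ∩ Γ₂}, u = u', and u commutes with w. -/

import Mathlib

/-!
`W_Γ` is the Coxeter group with `m = 2` on edges and `m = ∞` on non-edges. Its exchange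
condition comes from the Björner–Brenti representation on `W_Γ × Bool`: `s_i` conjugates the
first coordinate and flips the second exactly when the first is `s_i`, so the second coordinate
records whether a reflection is a right inversion. Exchange gives that the descents of an
element of `W_S` lie in `S`, and that `ℓ (u x) = ℓ u + ℓ x` for `x ∈ W_S` whenever `u` has no
right descent in `S`.

The theorem follows by induction on `ℓ v` for `v = u⁻¹ w u'`. A right descent `b` of `v` lies in
`Γ₂` and is a right descent of `u v = w u'`. Exchanging it in a word for `w` followed by a
reduced word for `u'` cannot delete a letter of `u'`, so `u' s_b u'⁻¹ ∈ W_{Γ₁}`. By additivity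
this element has length one, hence equals `s_b` (letter parities are conjugation invariant), so
`b ∈ Γ₁` and `u'` commutes with `s_b`; now replace `w` by `w s_b`. When `v = 1`, additivity for
`u` and `u'` forces `w = 1` and `u = u'`.
-/

def racgRels {V : Type*} (G : SimpleGraph V) : Set (FreeGroup V) :=
  {r | (∃ v, r = FreeGroup.of v * FreeGroup.of v) ∨
    ∃ u v, G.Adj u v ∧ r = FreeGroup.of u * FreeGroup.of v * FreeGroup.of u * FreeGroup.of v}

abbrev RACG {V : Type*} (G : SimpleGraph V) : Type _ := PresentedGroup (racgRels G)

def racgGen {V : Type*} (G : SimpleGraph V) (v : V) : RACG G := PresentedGroup.of v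

def specialSubgroup {V : Type*} (G : SimpleGraph V) (S : Set V) : Subgroup (RACG G) :=
  Subgroup.closure (racgGen G '' S)

def linkSet {V : Type*} (G : SimpleGraph V) (S : Set V) : Set V :=
  {u | ∀ s ∈ S, G.Adj u s}

noncomputable def wordLength {V : Type*} (G : SimpleGraph V) (g : RACG G) : ℕ :=
  sInf {n | ∃ l : List V, l.length = n ∧ (l.map (racgGen G)).prod = g}

lemma racgGen_sq {V : Type*} (G : SimpleGraph V) (v : V) :
    racgGen G v * racgGen G v = 1 := by
  have h : (QuotientGroup.mk (FreeGroup.of v * FreeGroup.of v) :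
      PresentedGroup (racgRels G)) = 1 := by
    rw [QuotientGroup.eq_one_iff]
    exact Subgroup.subset_normalClosure (Or.inl ⟨v, rfl⟩)
  exact h

lemma racgGen_comm {V : Type*} (G : SimpleGraph V) {u v : V} (h : G.Adj u v) :
    racgGen G u * racgGen G v * racgGen G u * racgGen G v = 1 := by
  have h' : (QuotientGroup.mk (FreeGroup.of u * FreeGroup.of v * FreeGroup.of u * FreeGroup.of v) :
      PresentedGroup (racgRels G)) = 1 := by
    rw [QuotientGroup.eq_one_iff]
    exact Subgroup.subset_normalClosure (Or.inr ⟨u, v, h, rfl⟩)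
  exact h'

lemma racg_induce_lift {V : Type*} (G : SimpleGraph V) {S : Set V} {H : Type*} [Group H]
    (f : S → H) (hsq : ∀ v : S, f v * f v = 1)
    (hcomm : ∀ u v : S, G.Adj ↑u ↑v → f u * f v * f u * f v = 1) :
    ∀ r ∈ racgRels (G.induce S), FreeGroup.lift f r = 1 := by
  rintro r (⟨v, rfl⟩ | ⟨u, v, hadj, rfl⟩)
  · simpa [map_mul] using hsq v
  · have h' : G.Adj ↑u ↑v := hadj
    simpa [map_mul] using hcomm u v h'

/-- The canonical homomorphism between special subgroups induced by an inclusion of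
vertex sets. -/
def racgMapHom {V : Type*} (G : SimpleGraph V) {S T : Set V} (h : S ⊆ T) :
    RACG (G.induce S) →* RACG (G.induce T) :=
  PresentedGroup.toGroup (f := fun v : S => racgGen (G.induce T) ⟨v.1, h v.2⟩)
    (racg_induce_lift G _
      (fun v => racgGen_sq _ _)
      (fun u v hadj => racgGen_comm (G.induce T) (by exact hadj)))

/-- The canonical homomorphism from the special subgroup on `S` to the full
right-angled Coxeter group. -/
def racgInclHom {V : Type*} (G : SimpleGraph V) (S : Set V) :
    RACG (G.induce S) →* RACG G :=
  PresentedGroup.toGroup (f := fun v : S => racgGen G ↑v)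
    (racg_induce_lift G _
      (fun v => racgGen_sq _ _)
      (fun u v hadj => racgGen_comm G hadj))

namespace RACG

variable {V : Type*} (G : SimpleGraph V)

open Classical in
/-- Mathlib's convention: the entry `0` encodes `∞`, i.e. non-adjacent vertices satisfy no
relation. -/
noncomputable def coxeterMatrix : CoxeterMatrix V where
  M := Matrix.of fun i j => if i = j then 1 else if G.Adj i j then 2 else 0
  isSymm := by
    ext i j
    simp only [Matrix.transpose_apply, Matrix.of_apply, eq_comm (a := j), G.adj_comm]
  diagonal i := by simp
  off_diagonal i j h := by simp only [Matrix.of_apply, if_neg h]; split <;> omega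

lemma normalClosure_racgRels :
    Subgroup.normalClosure (racgRels G) =
      Subgroup.normalClosure (coxeterMatrix G).relationsSet := by
  apply le_antisymm <;> apply Subgroup.normalClosure_le_normal
  · rintro r (⟨v, rfl⟩ | ⟨a, b, hab, rfl⟩) <;> apply Subgroup.subset_normalClosure
    · exact ⟨(v, v), by simp [CoxeterMatrix.relation, coxeterMatrix]⟩
    · exact ⟨(a, b), by simp [CoxeterMatrix.relation, coxeterMatrix, hab.ne, hab, pow_two,
        mul_assoc]⟩
  · rintro r ⟨⟨a, b⟩, rfl⟩
    by_cases hab : a = b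
    · exact Subgroup.subset_normalClosure (Or.inl ⟨a, by
        simp [CoxeterMatrix.relation, coxeterMatrix, hab]⟩)
    by_cases hadj : G.Adj a b
    · exact Subgroup.subset_normalClosure (Or.inr ⟨a, b, hadj, by
        simp [CoxeterMatrix.relation, coxeterMatrix, hab, hadj, pow_two, mul_assoc]⟩)
    · simp [CoxeterMatrix.relation, coxeterMatrix, hab, hadj]

noncomputable def coxeterSystem : CoxeterSystem (coxeterMatrix G) (RACG G) :=
  ⟨QuotientGroup.quotientMulEquivOfEq (normalClosure_racgRels G)⟩

local prefix:100 "π" => CoxeterSystem.wordProd (coxeterSystem G)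
local prefix:100 "ℓ" => CoxeterSystem.length (coxeterSystem G)

@[simp]
lemma coxeterSystem_simple : (coxeterSystem G).simple = racgGen G := rfl

lemma wordLength_eq_length (g : RACG G) : wordLength G g = ℓ g := by
  obtain ⟨ω, hω, rfl⟩ := (coxeterSystem G).exists_isReduced g
  refine le_antisymm (Nat.sInf_le ⟨ω, hω.symm, rfl⟩)
    (le_csInf ⟨ω.length, ω, rfl, rfl⟩ ?_)
  rintro n ⟨l, rfl, hl⟩
  rw [← hl]
  exact (coxeterSystem G).length_wordProd_le l

section Characters

def character (f : V → ℤˣ) : RACG G →* ℤˣ :=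
  PresentedGroup.toGroup (f := f) <| by
    rintro r (⟨v, rfl⟩ | ⟨a, b, -, rfl⟩)
    · simp [Int.units_mul_self]
    · simp [mul_assoc, mul_left_comm (f b), Int.units_mul_self]

@[simp]
lemma character_racgGen (f : V → ℤˣ) (v : V) : character G f (racgGen G v) = f v :=
  PresentedGroup.toGroup.of _

variable {G}

lemma character_eq_one_of_mem {f : V → ℤˣ} {S : Set V} (hf : ∀ v ∈ S, f v = 1) {g : RACG G}
    (hg : g ∈ specialSubgroup G S) : character G f g = 1 :=
  (Subgroup.closure_le (K := (character G f).ker)).mpr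
    (by rintro _ ⟨v, hv, rfl⟩; simp [hf v hv]) hg

open Classical in
lemma mem_of_racgGen_mem_specialSubgroup {S : Set V} {c : V}
    (h : racgGen G c ∈ specialSubgroup G S) : c ∈ S := by
  by_contra hc
  have := character_eq_one_of_mem (f := Pi.mulSingle c (-1))
    (fun v hv => Pi.mulSingle_eq_of_ne (ne_of_mem_of_not_mem hv hc) _) h
  simp at this

open Classical in
lemma eq_of_isConj_racgGen {a c : V} (h : IsConj (racgGen G a) (racgGen G c)) : a = c := by
  obtain ⟨g, hg⟩ := isConj_iff.mp h
  have := congrArg (character G (Pi.mulSingle a (-1))) hg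
  by_contra hac
  simp [Pi.mulSingle_eq_of_ne' hac] at this

end Characters

section Exchange

@[simp]
lemma racgGen_inv (i : V) : (racgGen G i)⁻¹ = racgGen G i := (coxeterSystem G).inv_simple i

@[simp]
lemma racgGen_mul_racgGen_cancel_left (i : V) (x : RACG G) :
    racgGen G i * (racgGen G i * x) = x :=
  (coxeterSystem G).simple_mul_simple_cancel_left i

@[simp]
lemma racgGen_mul_racgGen_cancel_right (i : V) (x : RACG G) :
    x * racgGen G i * racgGen G i = x :=
  (coxeterSystem G).simple_mul_simple_cancel_right i

lemma racgGen_mul_mul_racgGen_eq_iff (i : V) (x y : RACG G) :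
    racgGen G i * x * racgGen G i = y ↔ x = racgGen G i * y * racgGen G i := by
  constructor <;> rintro rfl <;> simp [mul_assoc, racgGen_sq]

variable {G} in
lemma racgGen_commute {a b : V} (h : G.Adj a b) : Commute (racgGen G a) (racgGen G b) := by
  have := racgGen_comm G h
  rw [mul_assoc, mul_eq_one_iff_eq_inv] at this
  simpa [Commute, SemiconjBy, mul_assoc] using this

open Classical in
noncomputable def reflectionFlip (i : V) (p : RACG G × Bool) : RACG G × Bool :=
  (racgGen G i * p.1 * racgGen G i, if p.1 = racgGen G i then !p.2 else p.2)

lemma reflectionFlip_involutive (i : V) : Function.Involutive (reflectionFlip G i) := by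
  classical
  rintro ⟨x, ε⟩
  refine Prod.ext ?_ ?_
  · simp [reflectionFlip, mul_assoc, racgGen_sq]
  · simp only [reflectionFlip, racgGen_mul_mul_racgGen_eq_iff, racgGen_sq, one_mul]
    split_ifs <;> simp

variable {G} in
lemma reflectionFlip_comm {a b : V} (h : G.Adj a b) (p : RACG G × Bool) :
    reflectionFlip G a (reflectionFlip G b p) = reflectionFlip G b (reflectionFlip G a p) := by
  classical
  obtain ⟨x, ε⟩ := p
  have hab := (racgGen_commute h).eq
  refine Prod.ext ?_ ?_
  · calc _ = (racgGen G a * racgGen G b) * x * (racgGen G a * racgGen G b)⁻¹ := by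
          simp [reflectionFlip, mul_assoc]
      _ = (racgGen G b * racgGen G a) * x * (racgGen G b * racgGen G a)⁻¹ := by rw [hab]
      _ = _ := by simp [reflectionFlip, mul_assoc]
  · have hbab : racgGen G b * racgGen G a * racgGen G b = racgGen G a := by
      rw [← hab, racgGen_mul_racgGen_cancel_right]
    have haba : racgGen G a * racgGen G b * racgGen G a = racgGen G b := by
      rw [hab, racgGen_mul_racgGen_cancel_right]
    simp only [reflectionFlip, racgGen_mul_mul_racgGen_eq_iff, hbab, haba]
    split_ifs <;> simp

noncomputable def reflectionRep : RACG G →* Equiv.Perm (RACG G × Bool) :=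
  PresentedGroup.toGroup (f := fun i => (reflectionFlip_involutive G i).toPerm) <| by
    rintro r (⟨v, rfl⟩ | ⟨a, b, hab, rfl⟩) <;> ext1 p
    · exact reflectionFlip_involutive G v p
    · simp [reflectionFlip_comm hab, reflectionFlip_involutive G _ _]

lemma reflectionRep_racgGen (i : V) (p : RACG G × Bool) :
    reflectionRep G (racgGen G i) p = reflectionFlip G i p := by
  rw [reflectionRep, racgGen, PresentedGroup.toGroup.of]
  rfl

/-- `inversionParity g t` is the parity of the number of occurrences of `t` in the right
inversion sequence of any word for `g`. -/
noncomputable def inversionParity (g t : RACG G) : Bool := (reflectionRep G g (t, false)).2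

lemma reflectionRep_apply (g t : RACG G) (ε : Bool) :
    reflectionRep G g (t, ε) = (g * t * g⁻¹, xor ε (inversionParity G g t)) := by
  classical
  induction g using (coxeterSystem G).simple_induction_left generalizing t ε with
  | one => simp [inversionParity]
  | mul_simple_left g i ih =>
    have step (ε : Bool) : reflectionRep G (racgGen G i * g) (t, ε) =
        reflectionFlip G i (g * t * g⁻¹, xor ε (inversionParity G g t)) := by
      rw [map_mul, Equiv.Perm.mul_apply, ih, reflectionRep_racgGen]
    rw [coxeterSystem_simple, inversionParity, step, step]
    refine Prod.ext (by simp [reflectionFlip, mul_assoc]) ?_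
    simp only [reflectionFlip]
    split_ifs <;> simp

lemma inversionParity_mul (g h t : RACG G) :
    inversionParity G (g * h) t =
      xor (inversionParity G h t) (inversionParity G g (h * t * h⁻¹)) := by
  rw [inversionParity, map_mul, Equiv.Perm.mul_apply, reflectionRep_apply G h,
    reflectionRep_apply G g, Bool.false_xor]

open Classical in
lemma inversionParity_racgGen (i : V) (t : RACG G) :
    inversionParity G (racgGen G i) t = decide (t = racgGen G i) := by
  simp only [inversionParity, reflectionRep_racgGen, reflectionFlip]
  split_ifs <;> simp [*]

variable {G}

lemma exists_eraseIdx_of_inversionParity {ω : List V} {t : RACG G}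
    (h : inversionParity G (π ω) t = true) :
    ∃ j < ω.length, π ω * t = π (ω.eraseIdx j) := by
  classical
  induction ω with
  | nil => simp [inversionParity] at h
  | cons i σ ih =>
    rw [CoxeterSystem.wordProd_cons, inversionParity_mul, coxeterSystem_simple,
      inversionParity_racgGen] at h
    by_cases hc : π σ * t * (π σ)⁻¹ = racgGen G i
    · refine ⟨0, by simp, ?_⟩
      obtain rfl : t = (π σ)⁻¹ * racgGen G i * π σ := by rw [← hc]; group
      simp [CoxeterSystem.wordProd_cons, mul_assoc]
    · simp only [hc, decide_false, Bool.xor_false] at h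
      obtain ⟨j, hj, he⟩ := ih h
      refine ⟨j + 1, by simpa using hj, ?_⟩
      rw [List.eraseIdx_cons_succ, CoxeterSystem.wordProd_cons, CoxeterSystem.wordProd_cons,
        mul_assoc, he]

lemma inversionParity_of_isRightDescent {g : RACG G} {b : V}
    (h : (coxeterSystem G).IsRightDescent g b) : inversionParity G g (racgGen G b) = true := by
  classical
  -- Otherwise `s_b` has odd parity for the shorter element `g s_b`, and deleting a letter from
  -- a reduced word for `g s_b` yields a word for `g` that is shorter still.
  by_contra hg
  obtain ⟨ω, hω, hgb⟩ := (coxeterSystem G).exists_isReduced (g * racgGen G b)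
  have hω_parity : inversionParity G (π ω) (racgGen G b) = true := by
    rw [← hgb, inversionParity_mul, inversionParity_racgGen]
    simpa [racgGen_sq] using hg
  obtain ⟨j, hj, he⟩ := exists_eraseIdx_of_inversionParity hω_parity
  rw [← hgb, racgGen_mul_racgGen_cancel_right] at he
  have := (coxeterSystem G).length_wordProd_le (ω.eraseIdx j)
  rw [← he, List.length_eraseIdx_of_lt hj, ← hω.eq, ← hgb] at this
  rw [CoxeterSystem.IsRightDescent, coxeterSystem_simple] at h
  omega

theorem exists_eraseIdx_of_isRightDescent {ω : List V} {b : V}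
    (h : (coxeterSystem G).IsRightDescent (π ω) b) :
    ∃ j < ω.length, π ω * racgGen G b = π (ω.eraseIdx j) :=
  exists_eraseIdx_of_inversionParity (inversionParity_of_isRightDescent h)

end Exchange

variable {G}

lemma racgGen_mem_specialSubgroup {S : Set V} {v : V} (hv : v ∈ S) :
    racgGen G v ∈ specialSubgroup G S :=
  Subgroup.subset_closure ⟨v, hv, rfl⟩

lemma wordProd_mem_specialSubgroup {S : Set V} {ω : List V} (hω : ∀ x ∈ ω, x ∈ S) :
    π ω ∈ specialSubgroup G S :=
  Subgroup.list_prod_mem _ <| by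
    simpa using fun x hx => racgGen_mem_specialSubgroup (hω x hx)

lemma exists_wordProd_eq_of_mem_specialSubgroup {S : Set V} {g : RACG G}
    (hg : g ∈ specialSubgroup G S) : ∃ ω : List V, (∀ x ∈ ω, x ∈ S) ∧ π ω = g := by
  induction hg using Subgroup.closure_induction with
  | mem _ h =>
    obtain ⟨v, hv, rfl⟩ := h
    exact ⟨[v], by simpa using hv, by simp⟩
  | one => exact ⟨[], by simp, by simp⟩
  | mul _ _ _ _ h₁ h₂ =>
    obtain ⟨ω₁, hS₁, rfl⟩ := h₁
    obtain ⟨ω₂, hS₂, rfl⟩ := h₂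
    refine ⟨ω₁ ++ ω₂, fun x hx => ?_, CoxeterSystem.wordProd_append _ _ _⟩
    exact (List.mem_append.mp hx).elim (hS₁ x) (hS₂ x)
  | inv _ _ h =>
    obtain ⟨ω, hS, rfl⟩ := h
    exact ⟨ω.reverse, by simpa using hS, by simp⟩

lemma mem_of_isRightDescent {S : Set V} {g : RACG G} {b : V} (hg : g ∈ specialSubgroup G S)
    (hb : (coxeterSystem G).IsRightDescent g b) : b ∈ S := by
  obtain ⟨ω, hS, rfl⟩ := exists_wordProd_eq_of_mem_specialSubgroup hg
  obtain ⟨j, -, he⟩ := exists_eraseIdx_of_isRightDescent hb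
  have : π ω * racgGen G b ∈ specialSubgroup G S :=
    he ▸ wordProd_mem_specialSubgroup fun x hx => hS x (List.mem_of_mem_eraseIdx hx)
  exact mem_of_racgGen_mem_specialSubgroup
    (by simpa using Subgroup.mul_mem _ (Subgroup.inv_mem _ hg) this)

lemma exists_eraseIdx_or_isRightDescent_of_mul {ω₁ ω₂ : List V} {b : V}
    (hω₂ : (coxeterSystem G).IsReduced ω₂)
    (h : (coxeterSystem G).IsRightDescent (π ω₁ * π ω₂) b) :
    (∃ j < ω₁.length, π ω₁ * π ω₂ * racgGen G b = π (ω₁.eraseIdx j) * π ω₂) ∨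
      (coxeterSystem G).IsRightDescent (π ω₂) b := by
  rw [← CoxeterSystem.wordProd_append] at h
  obtain ⟨j, hj, he⟩ := exists_eraseIdx_of_isRightDescent h
  rw [CoxeterSystem.wordProd_append] at he
  obtain hj₁ | hj₁ := lt_or_ge j ω₁.length
  · rw [List.eraseIdx_append_of_lt_length hj₁, CoxeterSystem.wordProd_append] at he
    exact .inl ⟨j, hj₁, he⟩
  · rw [List.eraseIdx_append_of_length_le hj₁, CoxeterSystem.wordProd_append, mul_assoc,
      mul_right_inj] at he
    right
    have hk : j - ω₁.length < ω₂.length := by rw [List.length_append] at hj; omega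
    have := (coxeterSystem G).length_wordProd_le (ω₂.eraseIdx (j - ω₁.length))
    rw [← he, List.length_eraseIdx_of_lt hk] at this
    rw [CoxeterSystem.IsRightDescent, coxeterSystem_simple, hω₂.eq]
    omega

lemma length_mul_eq_add_of_minimal {S : Set V} {u : RACG G}
    (hu : ∀ y ∈ specialSubgroup G S, ℓ u ≤ ℓ (u * y)) {x : RACG G}
    (hx : x ∈ specialSubgroup G S) : ℓ (u * x) = ℓ u + ℓ x := by
  induction hn : ℓ x using Nat.strong_induction_on generalizing x with
  | _ n ih =>
  obtain rfl | hx1 := eq_or_ne x 1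
  · simp [← hn]
  obtain ⟨b, hb⟩ := (coxeterSystem G).exists_rightDescent_of_ne_one hx1
  have hbS := mem_of_isRightDescent hx hb
  obtain ⟨x, rfl⟩ : ∃ x', x = x' * racgGen G b := ⟨x * racgGen G b, by simp⟩
  have hxS : x ∈ specialSubgroup G S := by
    simpa using Subgroup.mul_mem _ hx (racgGen_mem_specialSubgroup hbS)
  have hlen : ℓ x + 1 = ℓ (x * racgGen G b) := by
    simpa using (coxeterSystem G).isRightDescent_iff.mp hb
  have ih' := ih (ℓ x) (by omega) hxS rfl
  suffices ¬ (coxeterSystem G).IsRightDescent (u * x) b by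
    rw [← mul_assoc, ← coxeterSystem_simple, (coxeterSystem G).not_isRightDescent_iff.mp this]
    omega
  intro hdesc
  obtain ⟨ωu, hωu, rfl⟩ := (coxeterSystem G).exists_isReduced u
  obtain ⟨ωx, hωx, rfl⟩ := (coxeterSystem G).exists_isReduced x
  rcases exists_eraseIdx_or_isRightDescent_of_mul hωx hdesc with ⟨j, hj, he⟩ | hdesc'
  · have hshort : π ωu * (π ωx * racgGen G b * (π ωx)⁻¹) = π (ωu.eraseIdx j) := by
      calc _ = π ωu * π ωx * racgGen G b * (π ωx)⁻¹ := by group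
        _ = π (ωu.eraseIdx j) := by rw [he, mul_inv_cancel_right]
    have := (coxeterSystem G).length_wordProd_le (ωu.eraseIdx j)
    rw [← hshort, List.length_eraseIdx_of_lt hj, ← hωu.eq] at this
    have := hu _ (Subgroup.mul_mem _ (Subgroup.mul_mem _ hxS
      (racgGen_mem_specialSubgroup hbS)) (Subgroup.inv_mem _ hxS))
    have : 0 < ℓ (π ωu) := by
      rw [hωu.eq]; exact List.length_pos_of_ne_nil (by rintro rfl; simp at hj)
    omega
  · rw [CoxeterSystem.IsRightDescent, coxeterSystem_simple] at hdesc'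
    omega

lemma exists_minimal_mul (u : RACG G) (S : Set V) :
    ∃ x ∈ specialSubgroup G S, ∀ y ∈ specialSubgroup G S,
      ℓ (u * x) ≤ ℓ (u * x * y) := by
  obtain ⟨x, hx, hmin⟩ := (InvImage.wf (fun x => ℓ (u * x)) wellFounded_lt).has_min
    (specialSubgroup G S : Set (RACG G)) ⟨1, Subgroup.one_mem _⟩
  refine ⟨x, hx, fun y hy => ?_⟩
  simpa [mul_assoc] using not_lt.mp (hmin (x * y) (Subgroup.mul_mem _ hx hy))

theorem length_mul_eq_add_of_forall_not_isRightDescent {S : Set V} {u : RACG G}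
    (hu : ∀ b ∈ S, ¬ (coxeterSystem G).IsRightDescent u b) {x : RACG G}
    (hx : x ∈ specialSubgroup G S) : ℓ (u * x) = ℓ u + ℓ x := by
  obtain ⟨x₀, hx₀, hmin⟩ := exists_minimal_mul u S
  have hadd {y : RACG G} (hy : y ∈ specialSubgroup G S) :
      ℓ (u * x₀ * y) = ℓ (u * x₀) + ℓ y :=
    length_mul_eq_add_of_minimal hmin hy
  obtain rfl | hx₀1 := eq_or_ne x₀ 1
  · simpa using hadd hx
  obtain ⟨b, hb⟩ := (coxeterSystem G).exists_rightDescent_of_ne_one (inv_ne_one.mpr hx₀1)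
  have hbS := mem_of_isRightDescent (Subgroup.inv_mem _ hx₀) hb
  have h₁ :=
    hadd (Subgroup.mul_mem _ (Subgroup.inv_mem _ hx₀) (racgGen_mem_specialSubgroup hbS))
  have h₂ := hadd (Subgroup.inv_mem _ hx₀)
  simp only [mul_inv_cancel_right, ← mul_assoc] at h₁ h₂
  refine absurd ?_ (hu b hbS)
  rw [CoxeterSystem.IsRightDescent, coxeterSystem_simple, h₁, h₂]
  rw [CoxeterSystem.IsRightDescent, coxeterSystem_simple] at hb
  omega

theorem length_mul_eq_add_of_forall_not_isLeftDescent {S : Set V} {u : RACG G}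
    (hu : ∀ a ∈ S, ¬ (coxeterSystem G).IsLeftDescent u a) {x : RACG G}
    (hx : x ∈ specialSubgroup G S) : ℓ (x * u) = ℓ x + ℓ u := by
  have := length_mul_eq_add_of_forall_not_isRightDescent (u := u⁻¹)
    (fun b hb => (coxeterSystem G).isRightDescent_inv_iff.not.mpr (hu b hb))
    (Subgroup.inv_mem _ hx)
  rwa [← mul_inv_rev, CoxeterSystem.length_inv, CoxeterSystem.length_inv,
    CoxeterSystem.length_inv, add_comm] at this

lemma mem_and_commute_of_conj_mem {S : Set V} {u : RACG G} {b : V}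
    (hu : ∀ a ∈ S, ¬ (coxeterSystem G).IsLeftDescent u a)
    (hb : ¬ (coxeterSystem G).IsRightDescent u b)
    (h : u * racgGen G b * u⁻¹ ∈ specialSubgroup G S) :
    b ∈ S ∧ Commute u (racgGen G b) := by
  have hlen := length_mul_eq_add_of_forall_not_isLeftDescent hu h
  rw [inv_mul_cancel_right] at hlen
  rw [(coxeterSystem G).not_isRightDescent_iff, coxeterSystem_simple] at hb
  obtain ⟨c, hc⟩ :=
    (coxeterSystem G).length_eq_one_iff.mp (by omega : ℓ (u * racgGen G b * u⁻¹) = 1)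
  rw [coxeterSystem_simple] at hc
  obtain rfl := eq_of_isConj_racgGen (isConj_iff.mpr ⟨u, hc⟩)
  exact ⟨mem_of_racgGen_mem_specialSubgroup (hc ▸ h), mul_inv_eq_iff_eq_mul.mp hc⟩

lemma mem_and_commute_of_isRightDescent {Γ₁ Γ₂ : Set V} {w u u' : RACG G}
    (hw : w ∈ specialSubgroup G Γ₁)
    (hu_end : ∀ b ∈ Γ₂, ¬ (coxeterSystem G).IsRightDescent u b)
    (hu'_start : ∀ a ∈ Γ₁, ¬ (coxeterSystem G).IsLeftDescent u' a)
    (hu'_end : ∀ b ∈ Γ₂, ¬ (coxeterSystem G).IsRightDescent u' b)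
    (hv : u⁻¹ * w * u' ∈ specialSubgroup G Γ₂) {b : V}
    (hb : (coxeterSystem G).IsRightDescent (u⁻¹ * w * u') b) :
    b ∈ Γ₁ ∧ Commute u' (racgGen G b) := by
  have hbΓ₂ := mem_of_isRightDescent hv hb
  have hdesc : (coxeterSystem G).IsRightDescent (w * u') b := by
    have hvb := Subgroup.mul_mem _ hv (racgGen_mem_specialSubgroup hbΓ₂)
    rw [CoxeterSystem.IsRightDescent, coxeterSystem_simple] at hb ⊢
    have h₁ := length_mul_eq_add_of_forall_not_isRightDescent hu_end hv
    have h₂ := length_mul_eq_add_of_forall_not_isRightDescent hu_end hvb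
    simp only [← mul_assoc, mul_inv_cancel, one_mul] at h₁ h₂
    omega
  obtain ⟨ω₁, hω₁, rfl⟩ := exists_wordProd_eq_of_mem_specialSubgroup hw
  obtain ⟨ω₂, hω₂, rfl⟩ := (coxeterSystem G).exists_isReduced u'
  rcases exists_eraseIdx_or_isRightDescent_of_mul hω₂ hdesc with ⟨j, -, he⟩ | hdesc'
  · refine mem_and_commute_of_conj_mem hu'_start (hu'_end b hbΓ₂) ?_
    have : π ω₂ * racgGen G b * (π ω₂)⁻¹ = (π ω₁)⁻¹ * π (ω₁.eraseIdx j) := by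
      rw [← mul_inv_cancel_right (π (ω₁.eraseIdx j)) (π ω₂), ← he]
      group
    rw [this]
    exact Subgroup.mul_mem _ (Subgroup.inv_mem _ hw)
      (wordProd_mem_specialSubgroup fun x hx => hω₁ x (List.mem_of_mem_eraseIdx hx))
  · exact absurd hdesc' (hu'_end b hbΓ₂)

theorem mem_inter_and_eq_and_commute {Γ₁ Γ₂ : Set V} {u u' : RACG G}
    (hu_start : ∀ a ∈ Γ₁, ¬ (coxeterSystem G).IsLeftDescent u a)
    (hu'_start : ∀ a ∈ Γ₁, ¬ (coxeterSystem G).IsLeftDescent u' a)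
    (hu_end : ∀ b ∈ Γ₂, ¬ (coxeterSystem G).IsRightDescent u b)
    (hu'_end : ∀ b ∈ Γ₂, ¬ (coxeterSystem G).IsRightDescent u' b)
    {w : RACG G} (hw : w ∈ specialSubgroup G Γ₁)
    (hv : u⁻¹ * w * u' ∈ specialSubgroup G Γ₂) :
    w ∈ specialSubgroup G (Γ₁ ∩ Γ₂) ∧ u = u' ∧ Commute u w := by
  induction hn : ℓ (u⁻¹ * w * u') using Nat.strong_induction_on generalizing w with
  | _ n ih =>
  obtain hv1 | hv1 := eq_or_ne (u⁻¹ * w * u') 1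
  · have hu : u = w * u' := inv_mul_eq_one.mp (by simpa [mul_assoc] using hv1)
    have h₁ := length_mul_eq_add_of_forall_not_isLeftDescent hu'_start hw
    have h₂ := length_mul_eq_add_of_forall_not_isLeftDescent hu_start (Subgroup.inv_mem _ hw)
    rw [hu, inv_mul_cancel_left, CoxeterSystem.length_inv] at h₂
    obtain rfl : w = 1 := (coxeterSystem G).length_eq_zero_iff.mp (by omega)
    exact ⟨Subgroup.one_mem _, by simpa using hu, Commute.one_right u⟩
  obtain ⟨b, hb⟩ := (coxeterSystem G).exists_rightDescent_of_ne_one hv1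
  have hbΓ₂ := mem_of_isRightDescent hv hb
  obtain ⟨hbΓ₁, hcomm⟩ := mem_and_commute_of_isRightDescent hw hu_end hu'_start hu'_end hv hb
  have hconj : u⁻¹ * (w * racgGen G b) * u' = u⁻¹ * w * u' * racgGen G b := by
    simp only [mul_assoc, hcomm.eq]
  have hlen : ℓ (u⁻¹ * (w * racgGen G b) * u') < n := by
    rw [hconj, ← hn]; exact hb
  obtain ⟨hmem, rfl, hcomm'⟩ := ih _ hlen
    (Subgroup.mul_mem _ hw (racgGen_mem_specialSubgroup hbΓ₁))
    (hconj ▸ Subgroup.mul_mem _ hv (racgGen_mem_specialSubgroup hbΓ₂)) rfl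
  refine ⟨?_, rfl, ?_⟩
  · simpa [mul_assoc, racgGen_sq] using
      Subgroup.mul_mem _ hmem (racgGen_mem_specialSubgroup (G := G) ⟨hbΓ₁, hbΓ₂⟩)
  · simpa [mul_assoc, racgGen_sq] using hcomm'.mul_right hcomm

end RACG

theorem racg_word_combinatorics_general
    {V : Type*} (G : SimpleGraph V) (Γ₁ Γ₂ : Set V)
    (w u u' : RACG G)
    (hw : w ∈ specialSubgroup G Γ₁)
    (hu_start : ∀ a ∈ Γ₁, wordLength G u < wordLength G (racgGen G a * u))
    (hu'_start : ∀ a ∈ Γ₁, wordLength G u' < wordLength G (racgGen G a * u'))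
    (hu_end : ∀ a ∈ Γ₂, wordLength G u < wordLength G (u * racgGen G a))
    (hu'_end : ∀ a ∈ Γ₂, wordLength G u' < wordLength G (u' * racgGen G a))
    (hconj : u⁻¹ * w * u' ∈ specialSubgroup G Γ₂) :
    w ∈ specialSubgroup G (Γ₁ ∩ Γ₂) ∧ u = u' ∧ u * w = w * u := by
  simp only [RACG.wordLength_eq_length] at hu_start hu'_start hu_end hu'_end
  obtain ⟨hmem, rfl, hcomm⟩ := RACG.mem_inter_and_eq_and_commute
    (fun a ha => lt_asymm (hu_start a ha)) (fun a ha => lt_asymm (hu'_start a ha))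
    (fun b hb => lt_asymm (hu_end b hb)) (fun b hb => lt_asymm (hu'_end b hb)) hw hconj
  exact ⟨hmem, rfl, hcomm.eq⟩

/-- Word combinatorics lemma: if `w ∈ W_{Γ₁}`, `u, u'` have no letters from `Γ₁` at the
start and no letters from `Γ₂` at the end, and `u⁻¹ w u' ∈ W_{Γ₂}`, then
`w ∈ W_{Γ₁ ∩ Γ₂}`, `u = u'` and `u` commutes with `w`. -/
theorem racg_word_combinatorics
    {V : Type*} [Fintype V] (G : SimpleGraph V) (Γ₁ Γ₂ : Set V)
    (w u u' : RACG G)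
    (hw : w ∈ specialSubgroup G Γ₁)
    (hu_start : ∀ a ∈ Γ₁, wordLength G u < wordLength G (racgGen G a * u))
    (hu'_start : ∀ a ∈ Γ₁, wordLength G u' < wordLength G (racgGen G a * u'))
    (hu_end : ∀ a ∈ Γ₂, wordLength G u < wordLength G (u * racgGen G a))
    (hu'_end : ∀ a ∈ Γ₂, wordLength G u' < wordLength G (u' * racgGen G a))
    (hconj : u⁻¹ * w * u' ∈ specialSubgroup G Γ₂) :
    w ∈ specialSubgroup G (Γ₁ ∩ Γ₂) ∧ u = u' ∧ u * w = w * u :=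
  racg_word_combinatorics_general G Γ₁ Γ₂ w u u' hw hu_start hu'_start hu_end hu'_end hconj
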